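/- Suppose there exist a k-SCHGDD of type (n, m^t) and a k-SCGDD of type m^n. Then there exists a k-SCGDD of type (mt)^n. -/

import Mathlib

/-!
For `t ≠ 0` the map `φ : Z_m → Z_{mt}`, `x ↦ t x`, is an injective additive map onto the hole
subgroup `S = {0, t, …, (m−1)t}`. The base blocks of the SCHGDD cover every mixed difference outside `S`
exactly once, and the images under `id × φ` of the base blocks of the SCGDD cover every mixed
difference in `S` exactly once, while neither produces pure differences. Together they form a
`k`-SCGDD of type `(mt)^n`.
-/

/-- The multiset of differences `Δ_{ij}(B)`: for each base block `b ∈ B`, all differences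
`x − y` over ordered pairs of distinct points `(i,x), (j,y) ∈ b`. -/
def blockDelta {n M : ℕ} (B : Multiset (Finset (Fin n × ZMod M))) (i j : Fin n) :
    Multiset (ZMod M) :=
  B.bind (fun b =>
    ((b.val ×ˢ b.val).filter (fun p => p.1.1 = i ∧ p.2.1 = j ∧ p.1 ≠ p.2)).map
      (fun p => p.1.2 - p.2.2))

/-- The subgroup `S = {0, t, …, (m−1)t}` of `Z_{mt}` as a multiset. -/
def holeMultiples (m t : ℕ) : Multiset (ZMod (m * t)) :=
  (Multiset.range m).map (fun c => ((c * t : ℕ) : ZMod (m * t)))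

/-- The multiset `Z_{mt} \ S`, each element once. -/
def nonHoleDiffs (m t : ℕ) : Multiset (ZMod (m * t)) :=
  ((Multiset.range (m * t)).map (fun z => (z : ZMod (m * t)))).filter
    (fun z => z ∉ holeMultiples m t)

/-- A semi-cyclic `k`-HGDD of type `(n, m^t)`, given by its multiset `B` of base blocks
(`k`-subsets of `I_n × Z_{mt}`): developing by `+1` on second coordinates yields a
`k`-HGDD with groups `{i} × Z_{mt}` and holes `I_n × (S + l)`; equivalently,
`Δ_{ij}(B) = Z_{mt} \ S` for `i ≠ j` and `Δ_{ii}(B) = ∅`. -/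
def IsSCHGDD (k n m t : ℕ) (B : Multiset (Finset (Fin n × ZMod (m * t)))) : Prop :=
  (∀ b ∈ B, b.card = k) ∧
  (∀ i j : Fin n, i ≠ j → blockDelta B i j = nonHoleDiffs m t) ∧
  (∀ i : Fin n, blockDelta B i i = 0)

/-- A semi-cyclic `k`-GDD of type `m^n`, given by its multiset `B` of base blocks
(`k`-subsets of `I_n × Z_m`, groups `{i} × Z_m`): `Δ_{ij}(B) = Z_m` for `i ≠ j` and
`Δ_{ii}(B) = ∅`. -/
def IsSCGDD (k n m : ℕ) (B : Multiset (Finset (Fin n × ZMod m))) : Prop :=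
  (∀ b ∈ B, b.card = k) ∧
  (∀ i j : Fin n, i ≠ j →
    blockDelta B i j = (Multiset.range m).map (fun z => (z : ZMod m))) ∧
  (∀ i : Fin n, blockDelta B i i = 0)

open Multiset Function

def residues (N : ℕ) : Multiset (ZMod N) :=
  (range N).map Nat.cast

-- The coercion in `IsSCGDD` is elaborated through the `Multiset` monad, not as `map Nat.cast`.
lemma map_range_coe_eq_residues (N : ℕ) :
    (range N).map (fun z => (z : ZMod N)) = residues N := by
  simp [residues, Bind.bind, Pure.pure, bind_singleton]

lemma isSCGDD_iff {k n m : ℕ} {B : Multiset (Finset (Fin n × ZMod m))} :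
    IsSCGDD k n m B ↔
      (∀ b ∈ B, b.card = k) ∧ (∀ i j, i ≠ j → blockDelta B i j = residues m) ∧
        ∀ i, blockDelta B i i = 0 := by
  rw [IsSCGDD, map_range_coe_eq_residues]

lemma nodup_residues (N : ℕ) : (residues N).Nodup :=
  (nodup_range N).map_on fun a ha b hb hab => by
    rw [mem_range] at ha hb
    simpa [ZMod.val_cast_of_lt ha, ZMod.val_cast_of_lt hb] using congrArg ZMod.val hab

lemma blockDelta_add {n M : ℕ} (X Y : Multiset (Finset (Fin n × ZMod M))) (i j : Fin n) :
    blockDelta (X + Y) i j = blockDelta X i j + blockDelta Y i j :=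
  add_bind X Y _

lemma blockDelta_map_prodMap {n M M' : ℕ} (C : Multiset (Finset (Fin n × ZMod M)))
    (φ : ZMod M →+ ZMod M') (hφ : Injective φ) (i j : Fin n) :
    blockDelta (C.map (Finset.map ((Embedding.refl _).prodMap ⟨φ, hφ⟩))) i j =
      (blockDelta C i j).map φ := by
  set e : Fin n × ZMod M ↪ Fin n × ZMod M' := (Embedding.refl _).prodMap ⟨φ, hφ⟩
  rw [blockDelta, blockDelta, bind_map, map_bind]
  refine bind_congr fun b _ => ?_
  rw [← Finset.product_val, ← Finset.prodMap_map_product, Finset.map_val, filter_map, map_map,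
    map_map, Finset.product_val]
  congr 1
  · funext p
    simp [e]
  · refine filter_congr fun p _ => ?_
    change (e p.1).1 = i ∧ (e p.2).1 = j ∧ e p.1 ≠ e p.2 ↔ _
    rw [e.injective.ne_iff]
    rfl

def scaleHom (m t : ℕ) : ZMod m →+ ZMod (m * t) :=
  ZMod.lift m ⟨(AddMonoidHom.mulRight (t : ZMod (m * t))).comp (Int.castAddHom _), by
    change ((m : ℤ) : ZMod (m * t)) * t = 0
    exact_mod_cast ZMod.natCast_self (m * t)⟩

lemma scaleHom_intCast (m t : ℕ) (a : ℤ) : scaleHom m t a = a * t :=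
  ZMod.lift_coe _ _ _

lemma scaleHom_natCast (m t c : ℕ) : scaleHom m t c = ((c * t : ℕ) : ZMod (m * t)) := by
  simpa using scaleHom_intCast m t c

lemma scaleHom_injective {t : ℕ} (ht : t ≠ 0) (m : ℕ) : Injective (scaleHom m t) := by
  refine (injective_iff_map_eq_zero _).2 fun x hx => ?_
  obtain ⟨a, rfl⟩ := ZMod.intCast_surjective x
  rw [scaleHom_intCast, ← Int.cast_natCast t, ← Int.cast_mul,
    ZMod.intCast_zmod_eq_zero_iff_dvd, Nat.cast_mul] at hx
  rw [ZMod.intCast_zmod_eq_zero_iff_dvd]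
  exact Int.dvd_of_mul_dvd_mul_right (by exact_mod_cast ht) hx

lemma map_scaleHom_residues (m t : ℕ) : (residues m).map (scaleHom m t) = holeMultiples m t := by
  rw [residues, map_map]
  exact map_congr rfl fun c _ => scaleHom_natCast m t c

lemma holeMultiples_subset_residues {t : ℕ} (ht : t ≠ 0) (m : ℕ) :
    holeMultiples m t ⊆ residues (m * t) := fun _ hz => by
  obtain ⟨c, hc, rfl⟩ := mem_map.1 hz
  exact mem_map.2 ⟨c * t, mem_range.2 (Nat.mul_lt_mul_of_pos_right (mem_range.1 hc)
    (Nat.pos_of_ne_zero ht)), rfl⟩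

lemma nodup_holeMultiples {t : ℕ} (ht : t ≠ 0) (m : ℕ) : (holeMultiples m t).Nodup :=
  map_scaleHom_residues m t ▸ (nodup_residues m).map (scaleHom_injective ht m)

lemma nonHoleDiffs_add_holeMultiples {t : ℕ} (ht : t ≠ 0) (m : ℕ) :
    nonHoleDiffs m t + holeMultiples m t = residues (m * t) := by
  have h_holes :
      (residues (m * t)).filter (fun z => ¬z ∉ holeMultiples m t) = holeMultiples m t := by
    refine ((nodup_residues _).filter _).ext (nodup_holeMultiples ht m) |>.2 fun z => ?_
    rw [mem_filter, not_not]
    exact and_iff_right_of_imp (holeMultiples_subset_residues ht m ·)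
  have h_split := filter_add_not (· ∉ holeMultiples m t) (residues (m * t))
  rw [h_holes] at h_split
  rwa [nonHoleDiffs, map_range_coe_eq_residues]

lemma isSCGDD_add_map_scaleHom {k n m t : ℕ} (ht : t ≠ 0)
    {B : Multiset (Finset (Fin n × ZMod (m * t)))} {C : Multiset (Finset (Fin n × ZMod m))}
    (hB : IsSCHGDD k n m t B) (hC : IsSCGDD k n m C) :
    IsSCGDD k n (m * t) (B + C.map (Finset.map
      ((Embedding.refl _).prodMap ⟨scaleHom m t, scaleHom_injective ht m⟩))) := by
  obtain ⟨hB_card, hB_off, hB_diag⟩ := hB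
  obtain ⟨hC_card, hC_off, hC_diag⟩ := isSCGDD_iff.1 hC
  refine isSCGDD_iff.2 ⟨fun b hb => ?_, fun i j hij => ?_, fun i => ?_⟩
  · rcases mem_add.1 hb with hb | hb
    · exact hB_card b hb
    · obtain ⟨c, hc, rfl⟩ := mem_map.1 hb
      rw [Finset.card_map, hC_card c hc]
  · rw [blockDelta_add, blockDelta_map_prodMap, hB_off i j hij, hC_off i j hij,
      map_scaleHom_residues, nonHoleDiffs_add_holeMultiples ht]
  · rw [blockDelta_add, blockDelta_map_prodMap, hB_diag i, hC_diag i, Multiset.map_zero,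
      add_zero]

/-- If there exist a `k`-SCHGDD of type `(n, m^t)` and a `k`-SCGDD of type `m^n`, then
there exists a `k`-SCGDD of type `(mt)^n`. -/
theorem scgdd_of_schgdd_and_scgdd (k n m t : ℕ)
    (h1 : ∃ B : Multiset (Finset (Fin n × ZMod (m * t))), IsSCHGDD k n m t B)
    (h2 : ∃ C : Multiset (Finset (Fin n × ZMod m)), IsSCGDD k n m C) :
    ∃ D : Multiset (Finset (Fin n × ZMod (m * t))), IsSCGDD k n (m * t) D := by
  rcases eq_or_ne t 0 with rfl | ht
  · exact ⟨0, by simp [IsSCGDD, blockDelta]⟩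
  obtain ⟨B, hB⟩ := h1
  obtain ⟨C, hC⟩ := h2
  exact ⟨_, isSCGDD_add_map_scaleHom ht hB hC⟩
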